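/- arXiv:math/9201270 — 5 statements merged into one kernel-verified Lean document; each statement's English description precedes it below -/
import Mathlib

section
/- Let V : ℝ² → ℝ be C¹ with V(x,y) = 0 whenever y = 0, ∇V(x,y) = 0 only when y = 0, and V bounded below. Let u : [0,∞) → ℝ² be a global solution of ü + u̇ + ∇V(u) = 0 with E(u,0) = ½|u̇(0)|² + V(u(0)) < 0. Then u(t) is unbounded as t → ∞. -/
open Real Set Filter Topology

local notation "ℝ²" => EuclideanSpace ℝ (Fin 2)
local notation "⟪" x ", " y "⟫" => @inner ℝ _ _ x y

/-- Energy dissipation: the energy has derivative `-‖u'‖²` along the flow. -/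
lemma stmt6_energy_deriv (V : ℝ² → ℝ) (hV : ContDiff ℝ 1 V)
    (u u' u'' : ℝ → ℝ²)
    (hu : ∀ t ∈ Set.Ici (0:ℝ), HasDerivWithinAt u (u' t) (Set.Ici 0) t)
    (hu' : ∀ t ∈ Set.Ici (0:ℝ), HasDerivWithinAt u' (u'' t) (Set.Ici 0) t)
    (hode : ∀ t ∈ Set.Ici (0:ℝ), u'' t + u' t + gradient V (u t) = 0) :
    ∀ t ∈ Set.Ici (0:ℝ), HasDerivWithinAt (fun s => (1/2)*‖u' s‖^2 + V (u s))
      (-‖u' t‖^2) (Set.Ici 0) t := by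
  intro t ht
  have hVu : HasDerivWithinAt (fun s => V (u s)) ⟪gradient V (u t), u' t⟫ (Set.Ici 0) t := by
    have h1 : HasGradientAt V (gradient V (u t)) (u t) :=
      (hV.differentiable one_ne_zero (u t)).hasGradientAt
    have h2 := h1.hasFDerivAt.comp_hasDerivWithinAt t (hu t ht)
    simp at h2 ⊢
    exact h2
  have hnorm : HasDerivWithinAt (fun s => (1/2)*‖u' s‖^2)
      ((1/2)*(⟪u' t, u'' t⟫ + ⟪u'' t, u' t⟫)) (Set.Ici 0) t := by
    have h0 := ((hu' t ht).inner ℝ (hu' t ht)).const_mul (1/2)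
    have : (fun s => (1/2 : ℝ)*‖u' s‖^2) = (fun s => (1/2 : ℝ) * ⟪u' s, u' s⟫) := by
      funext s; rw [real_inner_self_eq_norm_sq]
    rw [this]; exact h0
  have := hnorm.add hVu
  refine HasDerivWithinAt.congr_deriv this ?_
  have h2 : u'' t + gradient V (u t) = -u' t := by
    have := hode t ht; linear_combination (norm := module) this
  have h3 : ⟪u' t, u'' t⟫ = ⟪u'' t, u' t⟫ := real_inner_comm _ _
  have h4 : ⟪u'' t, u' t⟫ + ⟪gradient V (u t), u' t⟫ = ⟪u'' t + gradient V (u t), u' t⟫ :=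
    (inner_add_left _ _ _).symm
  rw [h3]
  have : (1/2 : ℝ)*(⟪u'' t, u' t⟫ + ⟪u'' t, u' t⟫) = ⟪u'' t, u' t⟫ := by ring
  rw [this, h4, h2, inner_neg_left, real_inner_self_eq_norm_sq]

set_option maxHeartbeats 1000000 in
/-- a global negative-energy solution is unbounded as t → ∞. -/
theorem stmt_6 (V : EuclideanSpace ℝ (Fin 2) → ℝ) (hV : ContDiff ℝ 1 V)
    (hV0 : ∀ p : EuclideanSpace ℝ (Fin 2), p 1 = 0 → V p = 0)
    (hcrit : ∀ p : EuclideanSpace ℝ (Fin 2), gradient V p = 0 → p 1 = 0)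
    (hVlb : ∃ c, ∀ p, c ≤ V p)
    (u u' u'' : ℝ → EuclideanSpace ℝ (Fin 2))
    (hu : ∀ t ∈ Set.Ici (0:ℝ), HasDerivWithinAt u (u' t) (Set.Ici 0) t)
    (hu' : ∀ t ∈ Set.Ici (0:ℝ), HasDerivWithinAt u' (u'' t) (Set.Ici 0) t)
    (hode : ∀ t ∈ Set.Ici (0:ℝ), u'' t + u' t + gradient V (u t) = 0)
    (hE0 : (1/2) * ‖u' 0‖^2 + V (u 0) < 0) :
    ¬ ∃ C, ∀ t ∈ Set.Ici (0:ℝ), ‖u t‖ ≤ C := by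
  rintro ⟨C, hC⟩
  obtain ⟨c, hc⟩ := hVlb
  set E : ℝ → ℝ := fun t => (1/2)*‖u' t‖^2 + V (u t) with hEdef
  have hEt : ∀ s : ℝ, E s = (1/2)*‖u' s‖^2 + V (u s) := fun s => rfl
  have hEderiv : ∀ t ∈ Set.Ici (0:ℝ), HasDerivWithinAt E (-‖u' t‖^2) (Set.Ici 0) t :=
    stmt6_energy_deriv V hV u u' u'' hu hu' hode
  clear hEdef
  clear_value E
  have hgc : Continuous (gradient V) := by
    unfold gradient
    exact (LinearIsometryEquiv.continuous _).comp (hV.continuous_fderiv one_ne_zero)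
  have hucont : ContinuousOn u (Set.Ici 0) := fun t ht => (hu t ht).continuousWithinAt
  have hu'cont : ContinuousOn u' (Set.Ici 0) := fun t ht => (hu' t ht).continuousWithinAt
  have hEcont : ContinuousOn E (Set.Ici 0) := fun t ht => (hEderiv t ht).continuousWithinAt
  have hE00 : E 0 < 0 := by rw [hEt 0]; exact hE0
  have hsq_cont : ContinuousOn (fun t => ‖u' t‖^2) (Set.Ici 0) :=
    (hu'cont.norm).pow 2
  -- FTC for the energy
  have key : ∀ a b : ℝ, 0 ≤ a → a ≤ b → ∫ t in a..b, ‖u' t‖^2 = E a - E b := by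
    intro a b ha hab
    have hIcc : Set.Icc a b ⊆ Set.Ici (0:ℝ) := fun x hx => le_trans ha hx.1
    have hcont : ContinuousOn E (Set.Icc a b) := hEcont.mono hIcc
    have hderiv : ∀ x ∈ Set.Ioo a b, HasDerivWithinAt E (-‖u' x‖^2) (Set.Ioi x) x := by
      intro x hx
      have hx0 : (0:ℝ) < x := lt_of_le_of_lt ha hx.1
      have := (hEderiv x (le_of_lt hx0)).hasDerivAt (Ici_mem_nhds hx0)
      exact this.hasDerivWithinAt
    have hint : IntervalIntegrable (fun t => -‖u' t‖^2) MeasureTheory.volume a b := by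
      apply ContinuousOn.intervalIntegrable
      rw [Set.uIcc_of_le hab]
      exact ((hsq_cont.mono hIcc)).neg
    have := intervalIntegral.integral_eq_sub_of_hasDeriv_right_of_le hab hcont hderiv hint
    have h2 : ∫ t in a..b, ‖u' t‖^2 = -∫ t in a..b, -‖u' t‖^2 := by
      rw [intervalIntegral.integral_neg]; ring
    rw [h2, this]; ring
  -- energy is nonincreasing
  have hEmono : ∀ a b : ℝ, 0 ≤ a → a ≤ b → E b ≤ E a := by
    intro a b ha hab
    have h1 := key a b ha hab
    have h2 : (0:ℝ) ≤ ∫ t in a..b, ‖u' t‖^2 :=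
      intervalIntegral.integral_nonneg hab (fun x _ => by positivity)
    linarith
  -- V (u t) ≤ E t ≤ E 0 < 0
  have hVle : ∀ t, 0 ≤ t → V (u t) ≤ E 0 := by
    intro t ht
    have h1 : E t ≤ E 0 := hEmono 0 t le_rfl ht
    have h2 : V (u t) ≤ E t := by
      have h0 : (0:ℝ) ≤ (1/2)*‖u' t‖^2 := by positivity
      have het := hEt t
      linarith
    linarith
  -- velocity bound
  set A : ℝ := Real.sqrt (2*(E 0 - c)) with hAdef
  have hA0 : 0 ≤ A := Real.sqrt_nonneg _
  clear_value A
  have hA : ∀ t, 0 ≤ t → ‖u' t‖ ≤ A := by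
    intro t ht
    have h1 : E t ≤ E 0 := hEmono 0 t le_rfl ht
    have h2 : c ≤ V (u t) := hc _
    have he0 := hEt 0
    have het := hEt t
    have h3 : ‖u' t‖^2 ≤ 2*(E 0 - c) := by linarith
    calc ‖u' t‖ = Real.sqrt (‖u' t‖^2) := (Real.sqrt_sq (norm_nonneg _)).symm
    _ ≤ A := by rw [hAdef]; exact Real.sqrt_le_sqrt h3
  -- the compact sets
  have hball : IsCompact (Metric.closedBall (0:ℝ²) C) := isCompact_closedBall _ _
  have huball : ∀ t, 0 ≤ t → u t ∈ Metric.closedBall (0:ℝ²) C := by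
    intro t ht; rw [Metric.mem_closedBall, dist_zero_right]; exact hC t ht
  -- gradient sup bound on the ball
  obtain ⟨pG, hpG, hGmax⟩ := hball.exists_isMaxOn ⟨u 0, huball 0 le_rfl⟩
    (hgc.norm.continuousOn)
  set G : ℝ := ‖gradient V pG‖ with hGdef
  have hG : ∀ t, 0 ≤ t → ‖gradient V (u t)‖ ≤ G := fun t ht => hGmax (huball t ht)
  have hG0 : 0 ≤ G := norm_nonneg _
  clear_value G
  -- gradient lower bound δ on the sublevel set
  set S : Set ℝ² := Metric.closedBall (0:ℝ²) C ∩ {p | V p ≤ E 0} with hSdef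
  have hScomp : IsCompact S :=
    hball.inter_right (isClosed_le (hV.continuous) continuous_const)
  have hSne : S.Nonempty := ⟨u 0, huball 0 le_rfl, hVle 0 le_rfl⟩
  have hSmem : ∀ t, 0 ≤ t → u t ∈ S := fun t ht => Set.mem_inter (huball t ht) (hVle t ht)
  obtain ⟨pδ, hpδ, hδmin⟩ := hScomp.exists_isMinOn hSne (hgc.norm.continuousOn)
  set δ : ℝ := ‖gradient V pδ‖ with hδdef
  clear_value δ
  have hδpos : 0 < δ := by
    rw [hδdef, norm_pos_iff]
    intro h
    have h1 : pδ 1 = 0 := hcrit _ h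
    have h2 : V pδ = 0 := hV0 _ h1
    have h3 : V pδ ≤ E 0 := hpδ.2
    linarith
  have hδ : ∀ t, 0 ≤ t → δ ≤ ‖gradient V (u t)‖ := by
    intro t ht
    rw [hδdef]; exact hδmin (hSmem t ht)
  -- acceleration bound
  set B : ℝ := A + G with hBdef
  clear_value B
  have hB0 : 0 ≤ B := by rw [hBdef]; positivity
  have hB : ∀ t, 0 ≤ t → ‖u'' t‖ ≤ B := by
    intro t ht
    have h1 : u'' t = -(u' t) - gradient V (u t) := by
      have := hode t ht; linear_combination (norm := module) this
    rw [h1]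
    calc ‖-(u' t) - gradient V (u t)‖ ≤ ‖-(u' t)‖ + ‖gradient V (u t)‖ := norm_sub_le _ _
    _ ≤ A + G := by rw [norm_neg]; exact add_le_add (hA t ht) (hG t ht)
    _ = B := hBdef.symm
  -- u' is Lipschitz with constant B on Ici 0
  have hu'lip : ∀ a b : ℝ, 0 ≤ a → 0 ≤ b → ‖u' b - u' a‖ ≤ B * |b - a| := by
    intro a b ha hb
    have := Convex.norm_image_sub_le_of_norm_hasDerivWithin_le
      (f := u') (f' := u'') (s := Set.Ici (0:ℝ)) hu' (fun x hx => hB x hx)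
      (convex_Ici 0) ha hb
    simpa [Real.norm_eq_abs] using this
  have hulip : ∀ a b : ℝ, 0 ≤ a → 0 ≤ b → ‖u b - u a‖ ≤ A * |b - a| := by
    intro a b ha hb
    have := Convex.norm_image_sub_le_of_norm_hasDerivWithin_le
      (f := u) (f' := u') (s := Set.Ici (0:ℝ)) hu (fun x hx => hA x hx)
      (convex_Ici 0) ha hb
    simpa [Real.norm_eq_abs] using this
  -- Barbalat: the velocity tends to zero
  have hbarb : ∀ ε : ℝ, 0 < ε → ∃ T : ℝ, 0 ≤ T ∧ ∀ t, T ≤ t → ‖u' t‖ ≤ ε := by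
    intro ε hε
    by_contra hcon
    push_neg at hcon
    set L : ℝ := ε / (2*(B+1)) with hLdef
    have hL0 : 0 < L := by positivity
    clear_value L
    set q : ℝ := (ε/2)^2 * L with hqdef
    have hq0 : 0 < q := by positivity
    clear_value q
    -- on [t, t+L] the speed stays ≥ ε/2 if it is ≥ ε at t
    have hstay : ∀ t, 0 ≤ t → ε ≤ ‖u' t‖ → ∀ s, t ≤ s → s ≤ t + L → ε/2 ≤ ‖u' s‖ := by
      intro t ht hεt s hs1 hs2
      have hs0 : 0 ≤ s := le_trans ht hs1
      have h1 : ‖u' s - u' t‖ ≤ B * |s - t| := hu'lip t s ht hs0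
      have h2 : |s - t| ≤ L := by rw [abs_of_nonneg (by linarith)]; linarith
      have h3 : B * |s - t| ≤ B * L := by
        apply mul_le_mul_of_nonneg_left h2 hB0
      have h4 : B * L ≤ ε/2 := by
        rw [hLdef, ← mul_div_assoc, div_le_div_iff₀ (by positivity) (by norm_num : (0:ℝ) < 2)]
        nlinarith
      have h5 : ‖u' t‖ - ‖u' s‖ ≤ ‖u' s - u' t‖ := by
        have := norm_sub_norm_le (u' t) (u' s)
        rwa [← norm_neg (u' t - u' s), neg_sub] at this
      linarith
    -- each such window contributes q to the dissipated energy
    have hwindow : ∀ t, 0 ≤ t → ε ≤ ‖u' t‖ → q ≤ E t - E (t + L) := by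
      intro t ht hεt
      have h1 := key t (t+L) ht (by linarith)
      have h2 : ∫ s in t..(t+L), (ε/2)^2 ≤ ∫ s in t..(t+L), ‖u' s‖^2 := by
        apply intervalIntegral.integral_mono_on (by linarith)
        · exact intervalIntegrable_const
        · apply ContinuousOn.intervalIntegrable
          rw [Set.uIcc_of_le (by linarith)]
          exact hsq_cont.mono (fun x hx => le_trans ht hx.1)
        · intro x hx
          have := hstay t ht hεt x hx.1 hx.2
          nlinarith [norm_nonneg (u' x)]
      rw [intervalIntegral.integral_const] at h2
      have h3 : (t + L - t) • ((ε/2)^2) = q := by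
        rw [smul_eq_mul, hqdef]; ring
      rw [h3] at h2
      linarith
    -- by induction, total dissipation exceeds any multiple of q
    have hind : ∀ n : ℕ, ∃ T : ℝ, 0 ≤ T ∧ (n : ℝ) * q ≤ E 0 - E T := by
      intro n
      induction n with
      | zero => exact ⟨0, le_rfl, by simp⟩
      | succ n ih =>
        obtain ⟨T, hT0, hTq⟩ := ih
        obtain ⟨t, ht1, ht2⟩ := hcon T hT0
        have ht0 : 0 ≤ t := le_trans hT0 ht1
        refine ⟨t + L, by linarith, ?_⟩
        have h1 : q ≤ E t - E (t + L) := hwindow t ht0 (le_of_lt ht2)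
        have h2 : E t ≤ E T := hEmono T t hT0 ht1
        push_cast
        linarith
    obtain ⟨n, hn⟩ := exists_nat_gt ((E 0 - c)/q)
    obtain ⟨T, hT0, hTq⟩ := hind n
    have h1 : c ≤ E T := by
      have h2 : c ≤ V (u T) := hc _
      have h0 : (0:ℝ) ≤ (1/2)*‖u' T‖^2 := by positivity
      have het := hEt T
      linarith
    rw [div_lt_iff₀ hq0] at hn
    linarith
  -- uniform continuity of the gradient on the ball
  have hUC : UniformContinuousOn (gradient V) (Metric.closedBall (0:ℝ²) C) :=
    hball.uniformContinuousOn_of_continuous hgc.continuousOn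
  rw [Metric.uniformContinuousOn_iff] at hUC
  obtain ⟨r, hr0, hr⟩ := hUC (δ/2) (by positivity)
  -- choose window length and velocity threshold
  set l : ℝ := min 1 (r/(2*(A+1))) with hldef
  have hl0 : 0 < l := lt_min one_pos (by positivity)
  have hlr : l ≤ r/(2*(A+1)) := min_le_right _ _
  clear_value l
  have hlA : A * l < r := by
    have h1 : l ≤ r/(2*(A+1)) := hlr
    have h2 : A * l ≤ A * (r/(2*(A+1))) := mul_le_mul_of_nonneg_left h1 hA0
    have h3 : A * (r/(2*(A+1))) < r := by
      rw [← mul_div_assoc, div_lt_iff₀ (by positivity : (0:ℝ) < 2*(A+1))]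
      nlinarith [mul_nonneg hA0 hr0.le]
    linarith
  set ε : ℝ := δ*l/(4*(2+l)) with hεdef
  have hε0 : 0 < ε := by positivity
  clear_value ε
  obtain ⟨T, hT0, hT⟩ := hbarb ε hε0
  -- FTC for w = u' + u on [T, T+l]
  have hwderiv : ∀ x ∈ Set.Ioo T (T+l), HasDerivWithinAt (fun s => u' s + u s)
      (-(gradient V (u x))) (Set.Ioi x) x := by
    intro x hx
    have hx0 : (0:ℝ) < x := lt_of_le_of_lt hT0 hx.1
    have h1 := ((hu' x (le_of_lt hx0)).add (hu x (le_of_lt hx0))).hasDerivAt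
      (Ici_mem_nhds hx0)
    have h2 : u'' x + u' x = -(gradient V (u x)) := by
      have := hode x (le_of_lt hx0); linear_combination (norm := module) this
    rw [h2] at h1
    exact h1.hasDerivWithinAt
  have hwcont : ContinuousOn (fun s => u' s + u s) (Set.Icc T (T+l)) :=
    (hu'cont.add hucont).mono (fun x hx => le_trans hT0 hx.1)
  have hgint : IntervalIntegrable (fun s => -(gradient V (u s))) MeasureTheory.volume T (T+l) := by
    apply ContinuousOn.intervalIntegrable
    rw [Set.uIcc_of_le (by linarith)]
    exact ((hgc.comp_continuousOn (hucont.mono (fun x hx => le_trans hT0 hx.1)))).neg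
  have hFTC := intervalIntegral.integral_eq_sub_of_hasDeriv_right_of_le
    (by linarith : T ≤ T + l) hwcont hwderiv hgint
  -- upper bound on the increment
  have hup : ‖(u' (T+l) + u (T+l)) - (u' T + u T)‖ ≤ 2*ε + ε*l := by
    have h1 : ‖u' (T+l) - u' T‖ ≤ 2*ε := by
      calc ‖u' (T+l) - u' T‖ ≤ ‖u' (T+l)‖ + ‖u' T‖ := norm_sub_le _ _
      _ ≤ ε + ε := add_le_add (hT _ (by linarith)) (hT _ le_rfl)
      _ = 2*ε := by ring
    have h2 : ‖u (T+l) - u T‖ ≤ ε*l := by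
      have := Convex.norm_image_sub_le_of_norm_hasDerivWithin_le
        (f := u) (f' := u') (s := Set.Icc T (T+l))
        (fun x hx => (hu x (le_trans hT0 hx.1)).mono (fun y hy => le_trans hT0 hy.1))
        (fun x hx => hT x hx.1) (convex_Icc T (T+l))
        (Set.left_mem_Icc.2 (by linarith)) (Set.right_mem_Icc.2 (by linarith))
      calc ‖u (T+l) - u T‖ ≤ ε * ‖(T+l) - T‖ := this
      _ = ε * l := by rw [show (T+l) - T = l by ring, Real.norm_eq_abs, abs_of_pos hl0]
    calc ‖(u' (T+l) + u (T+l)) - (u' T + u T)‖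
        = ‖(u' (T+l) - u' T) + (u (T+l) - u T)‖ := by congr 1; abel
    _ ≤ ‖u' (T+l) - u' T‖ + ‖u (T+l) - u T‖ := norm_add_le _ _
    _ ≤ 2*ε + ε*l := add_le_add h1 h2
  -- lower bound on the integral
  have hgint' : IntervalIntegrable (fun s => gradient V (u s)) MeasureTheory.volume T (T+l) := by
    have h := hgint.neg
    have e : (-fun s => -gradient V (u s)) = (fun s => gradient V (u s)) := by
      funext s; simp
    rwa [e] at h
  have hsub : ∫ s in T..(T+l), (gradient V (u s) - gradient V (u T)) =
      (∫ s in T..(T+l), gradient V (u s)) - ∫ s in T..(T+l), (gradient V (u T)) :=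
    intervalIntegral.integral_sub hgint' intervalIntegrable_const
  have hconst : ∫ s in T..(T+l), (gradient V (u T)) = l • gradient V (u T) := by
    rw [intervalIntegral.integral_const]; congr 1; ring
  have hdiffbd : ‖∫ s in T..(T+l), (gradient V (u s) - gradient V (u T))‖ ≤ (δ/2) * |T+l - T| := by
    apply intervalIntegral.norm_integral_le_of_norm_le_const
    intro x hx
    rw [Set.uIoc_of_le (by linarith : T ≤ T + l)] at hx
    have hx0 : 0 ≤ x := le_trans hT0 (le_of_lt hx.1)
    have hd1 : dist (u x) (u T) < r := by
      rw [dist_eq_norm]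
      have h1 : ‖u x - u T‖ ≤ A * |x - T| := hulip T x hT0 hx0
      have h2 : |x - T| ≤ l := by
        rw [abs_of_nonneg (by linarith [hx.1.le] : (0:ℝ) ≤ x - T)]
        linarith [hx.2]
      calc ‖u x - u T‖ ≤ A * |x - T| := h1
      _ ≤ A * l := mul_le_mul_of_nonneg_left h2 hA0
      _ < r := hlA
    have := hr (u x) (huball x hx0) (u T) (huball T hT0) hd1
    rw [dist_eq_norm] at this
    exact le_of_lt this
  have habs : |T + l - T| = l := by rw [show T + l - T = l by ring, abs_of_pos hl0]
  have hlow : δ*l/2 ≤ ‖∫ s in T..(T+l), -(gradient V (u s))‖ := by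
    have h0 : ∫ s in T..(T+l), -(gradient V (u s)) = -∫ s in T..(T+l), gradient V (u s) := by
      rw [intervalIntegral.integral_neg]
    rw [h0, norm_neg]
    have h1 : ∫ s in T..(T+l), gradient V (u s) =
        l • gradient V (u T) + ∫ s in T..(T+l), (gradient V (u s) - gradient V (u T)) := by
      rw [hsub, hconst]; abel
    rw [h1]
    have h2 : ‖(l • gradient V (u T) : ℝ²)‖ = l * ‖gradient V (u T)‖ := by
      rw [norm_smul, Real.norm_eq_abs, abs_of_pos hl0]
    have h3 : l * δ ≤ ‖(l • gradient V (u T) : ℝ²)‖ := by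
      rw [h2]
      exact mul_le_mul_of_nonneg_left (hδ T hT0) (le_of_lt hl0)
    have h4 : ‖∫ s in T..(T+l), (gradient V (u s) - gradient V (u T))‖ ≤ (δ/2) * l := by
      rw [habs] at hdiffbd; exact hdiffbd
    have h5 : ‖(l • gradient V (u T) : ℝ²)‖ ≤
        ‖l • gradient V (u T) + ∫ s in T..(T+l), (gradient V (u s) - gradient V (u T))‖ +
          ‖∫ s in T..(T+l), (gradient V (u s) - gradient V (u T))‖ := by
      have e : (l • gradient V (u T) : ℝ²) =
          (l • gradient V (u T) + ∫ s in T..(T+l), (gradient V (u s) - gradient V (u T))) -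
            ∫ s in T..(T+l), (gradient V (u s) - gradient V (u T)) := by abel
      conv_lhs => rw [e]
      exact norm_sub_le
        (l • gradient V (u T) + ∫ s in T..(T+l), (gradient V (u s) - gradient V (u T)))
        (∫ s in T..(T+l), (gradient V (u s) - gradient V (u T)))
    linarith
  rw [hFTC] at hlow
  have hfin : 2*ε + ε*l = δ*l/4 := by
    have h2l : (2+l) ≠ 0 := by positivity
    calc 2*ε + ε*l = ε*(2+l) := by ring
    _ = δ*l*(2+l)/(4*(2+l)) := by rw [hεdef, div_mul_eq_mul_div]
    _ = δ*l/4 := mul_div_mul_right _ _ h2l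
  have : δ*l/2 ≤ δ*l/4 := by linarith
  nlinarith [mul_pos hδpos hl0]
end

section
/- Let V(x,y) = -exp(-1/y²)·sin(x+1/y) for y ≠ 0, V(x,0)=0, and let u_n be the solution with u_n(0) = (π/2, 1/(2πn)), u̇_n(0) = 0. Define t_n as the first time t > 0 with |u_n²(t)| = 1 (second coordinate reaching ±1). Then u_n²(t_n) = 1, u_n²(t) ∈ (0,1) for t ∈ (0,t_n), and t_n → ∞ as n → ∞. -/
open Real Set Filter Topology

/-- The potential V(x,y) = -exp(-1/y²)·sin(x + 1/y), extended by 0 on {y = 0}. -/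
noncomputable def Vpot (p : EuclideanSpace ℝ (Fin 2)) : ℝ :=
  if p 1 = 0 then 0 else -Real.exp (-(1 / (p 1)^2)) * Real.sin (p 0 + 1 / p 1)

lemma abs_coord_le (q : EuclideanSpace ℝ (Fin 2)) (i : Fin 2) : |q i| ≤ ‖q‖ := by
  rw [EuclideanSpace.norm_eq]
  rw [← Real.sqrt_sq (abs_nonneg (q i))]
  apply Real.sqrt_le_sqrt
  rw [sq_abs]
  have := Finset.single_le_sum (f := fun j => ‖q j‖^2) (fun j _ => by positivity)
    (Finset.mem_univ i)
  simpa [Real.norm_eq_abs, sq_abs] using this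

lemma exp_neg_inv_le {y : ℝ} (hy : y ≠ 0) : Real.exp (-(1/y^2)) ≤ y^2 := by
  rw [Real.exp_neg, inv_le_comm₀ (Real.exp_pos _) (by positivity)]
  calc (y^2)⁻¹ = 1/y^2 := by rw [inv_eq_one_div]
    _ ≤ Real.exp (1/y^2) := by linarith [Real.add_one_le_exp (1/y^2)]

lemma vpot_abs_le (p : EuclideanSpace ℝ (Fin 2)) : |Vpot p| ≤ (p 1)^2 := by
  unfold Vpot
  split_ifs with h
  · simp; positivity
  · rw [abs_mul, abs_neg, abs_of_pos (Real.exp_pos _)]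
    calc Real.exp (-(1/(p 1)^2)) * |Real.sin (p 0 + 1/p 1)| ≤ Real.exp (-(1/(p 1)^2)) * 1 := by
          exact mul_le_mul_of_nonneg_left (Real.abs_sin_le_one _) (Real.exp_pos _).le
      _ = Real.exp (-(1/(p 1)^2)) := mul_one _
      _ ≤ (p 1)^2 := exp_neg_inv_le h

lemma vpot_lower (p : EuclideanSpace ℝ (Fin 2)) : -Real.exp (-(1/(p 1)^2)) ≤ Vpot p := by
  unfold Vpot
  split_ifs with h
  · linarith [Real.exp_pos (-(1/(p 1)^2))]
  · rw [neg_mul]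
    apply neg_le_neg
    calc Real.exp (-(1/(p 1)^2)) * Real.sin (p 0 + 1/p 1)
        ≤ Real.exp (-(1/(p 1)^2)) * 1 :=
          mul_le_mul_of_nonneg_left (Real.sin_le_one _) (Real.exp_pos _).le
      _ = _ := mul_one _

lemma vpot_diff (p : EuclideanSpace ℝ (Fin 2)) : DifferentiableAt ℝ Vpot p := by
  by_cases hp : p 1 = 0
  · -- derivative 0 at points with second coord zero
    have h0 : Vpot p = 0 := by simp [Vpot, hp]
    apply HasFDerivAt.differentiableAt (f' := 0)
    rw [hasFDerivAt_iff_isLittleO_nhds_zero]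
    rw [Asymptotics.isLittleO_iff]
    intro c hc
    filter_upwards [Metric.ball_mem_nhds 0 hc] with v hv
    simp only [ContinuousLinearMap.zero_apply, sub_zero, h0]
    have h1 : |(p + v) 1| ≤ ‖v‖ := by
      have : (p + v) 1 = v 1 := by simp [hp]
      rw [this]
      exact abs_coord_le v 1
    calc ‖Vpot (p + v)‖ ≤ ((p+v) 1)^2 := by
          rw [Real.norm_eq_abs]; exact vpot_abs_le _
      _ = |(p+v) 1| * |(p+v) 1| := by rw [← abs_mul, abs_mul_self, sq]
      _ ≤ ‖v‖ * ‖v‖ := mul_le_mul h1 h1 (abs_nonneg _) (norm_nonneg _)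
      _ ≤ c * ‖v‖ := by
          apply mul_le_mul_of_nonneg_right _ (norm_nonneg _)
          exact (le_of_lt (by simpa using mem_ball_iff_norm.mp hv))
  · -- smooth formula near p
    have hy : DifferentiableAt ℝ (fun q : EuclideanSpace ℝ (Fin 2) => q 1) p :=
      (EuclideanSpace.proj (1 : Fin 2) : EuclideanSpace ℝ (Fin 2) →L[ℝ] ℝ).differentiableAt
    have hx : DifferentiableAt ℝ (fun q : EuclideanSpace ℝ (Fin 2) => q 0) p :=
      (EuclideanSpace.proj (0 : Fin 2) : EuclideanSpace ℝ (Fin 2) →L[ℝ] ℝ).differentiableAt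
    have h2 : DifferentiableAt ℝ (fun q : EuclideanSpace ℝ (Fin 2) => 1/(q 1)^2) p := by
      simp only [one_div]
      exact (hy.pow 2).inv (pow_ne_zero _ hp)
    have hinv : DifferentiableAt ℝ (fun q : EuclideanSpace ℝ (Fin 2) => 1/(q 1)) p := by
      simp only [one_div]
      exact hy.inv hp
    have hF : DifferentiableAt ℝ
        (fun q : EuclideanSpace ℝ (Fin 2) =>
          -Real.exp (-(1/(q 1)^2)) * Real.sin (q 0 + 1/(q 1))) p :=
      ((h2.neg.exp).neg).mul ((hx.add hinv).sin)
    apply hF.congr_of_eventuallyEq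
    have hopen : IsOpen {q : EuclideanSpace ℝ (Fin 2) | q 1 ≠ 0} :=
      isOpen_compl_iff.mpr (isClosed_singleton.preimage (EuclideanSpace.proj (1:Fin 2)).continuous)
    filter_upwards [hopen.mem_nhds hp] with q hq
    simp [Vpot, hq]

lemma main_aux (u u' u'' : ℝ → EuclideanSpace ℝ (Fin 2)) (y0 : ℝ) (hy0 : 0 < y0)
    (hy01 : 2*y0 < 1)
    (hu : ∀ t, HasDerivAt u (u' t) t) (hu' : ∀ t, HasDerivAt u' (u'' t) t)
    (hode : ∀ t, 0 ≤ t → u'' t + u' t + gradient Vpot (u t) = 0)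
    (h01 : u 0 1 = y0) (h0' : u' 0 = 0)
    (hV0 : Vpot (u 0) < 0)
    (T : ℝ) (hT : IsLeast {t : ℝ | 0 < t ∧ |u t 1| = 1} T) :
    u T 1 = 1 ∧ (∀ s ∈ Set.Ioo 0 T, u s 1 ∈ Set.Ioo (0:ℝ) 1) ∧
    y0 / Real.sqrt (2 * Real.exp (-(1/(4*y0^2)))) ≤ T := by
  obtain ⟨⟨hTpos, hTabs⟩, hTleast⟩ := hT
  -- energy
  set E : ℝ → ℝ := fun t => (inner ℝ (u' t) (u' t) : ℝ)/2 + Vpot (u t) with hEdef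
  have hEd : ∀ t, HasDerivAt E
      (((inner ℝ (u' t) (u'' t) : ℝ) + (inner ℝ (u'' t) (u' t) : ℝ))/2 + (inner ℝ (gradient Vpot (u t)) (u' t) : ℝ)) t := by
    intro t
    have h1 : HasDerivAt (fun s => (inner ℝ (u' s) (u' s) : ℝ)) ((inner ℝ (u' t) (u'' t) : ℝ) + (inner ℝ (u'' t) (u' t) : ℝ)) t :=
      (hu' t).inner ℝ (hu' t)
    have hg := (vpot_diff (u t)).hasGradientAt
    have h2 : HasDerivAt (fun s => Vpot (u s)) ((inner ℝ (gradient Vpot (u t)) (u' t) : ℝ)) t := by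
      have := HasFDerivAt.comp_hasDerivAt (x := t) hg.hasFDerivAt (hu t)
      simpa [Function.comp_def, InnerProductSpace.toDual_apply_apply] using this
    exact (h1.div_const 2).add h2
  have hEderiv_nonpos : ∀ t, 0 < t → deriv E t ≤ 0 := by
    intro t ht
    rw [(hEd t).deriv]
    have h := hode t ht.le
    have h'' : u'' t = -(u' t) - gradient Vpot (u t) := by
      have : u'' t + (u' t + gradient Vpot (u t)) = 0 := by rw [← add_assoc]; exact h
      rw [eq_neg_of_add_eq_zero_left this]; abel
    rw [h'']
    have hcomm : (inner ℝ (gradient Vpot (u t)) (u' t) : ℝ) = (inner ℝ (u' t) (gradient Vpot (u t)) : ℝ) :=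
      real_inner_comm _ _
    rw [inner_sub_left, inner_sub_right, inner_neg_left, inner_neg_right, hcomm]
    have h1 : (inner ℝ (u' t) (gradient Vpot (u t)) : ℝ) = (inner ℝ (gradient Vpot (u t)) (u' t) : ℝ) :=
      real_inner_comm _ _
    have h2 : (0:ℝ) ≤ (inner ℝ (u' t) (u' t) : ℝ) := real_inner_self_nonneg
    linarith [real_inner_comm (u' t) (gradient Vpot (u t))]
  have hEcont : Continuous E :=
    continuous_iff_continuousAt.mpr fun t => (hEd t).continuousAt
  have hmono : AntitoneOn E (Ici 0) := by
    apply antitoneOn_of_deriv_nonpos (convex_Ici 0) hEcont.continuousOn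
    · intro t ht
      exact (hEd t).differentiableAt.differentiableWithinAt
    · intro t ht
      rw [interior_Ici] at ht
      exact hEderiv_nonpos t ht
  have hE0 : E 0 = Vpot (u 0) := by
    simp [hEdef, h0']
  have hEneg : ∀ t, 0 ≤ t → E t ≤ Vpot (u 0) := by
    intro t ht
    rw [← hE0]
    exact hmono self_mem_Ici ht ht
  -- coordinate function
  have hyd : ∀ t, HasDerivAt (fun s => u s 1) (u' t 1) t := by
    intro t
    have := HasFDerivAt.comp_hasDerivAt (x := t) ((EuclideanSpace.proj (1 : Fin 2)).hasFDerivAt (x := u t)) (hu t)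
    simpa [Function.comp_def] using this
  have hycont : Continuous (fun s => u s 1) :=
    continuous_iff_continuousAt.mpr fun t => (hyd t).continuousAt
  -- second coordinate never vanishes for t ≥ 0
  have hyne : ∀ t, 0 ≤ t → u t 1 ≠ 0 := by
    intro t ht h
    have h1 : Vpot (u t) = 0 := by simp [Vpot, h]
    have h2 := hEneg t ht
    have h3 : (0:ℝ) ≤ (inner ℝ (u' t) (u' t) : ℝ) := real_inner_self_nonneg
    rw [hEdef] at h2
    simp only [h1, add_zero] at h2
    linarith
  have hypos : ∀ t, 0 ≤ t → 0 < u t 1 := by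
    intro t ht
    rcases lt_trichotomy (u t 1) 0 with h | h | h
    · exfalso
      have hmem0 : (0:ℝ) ∈ Icc ((fun s => u s 1) t) ((fun s => u s 1) 0) := by
        refine ⟨h.le, ?_⟩
        show (0:ℝ) ≤ u 0 1
        rw [h01]; exact hy0.le
      obtain ⟨s, hs, hs0⟩ := intermediate_value_Icc' ht hycont.continuousOn hmem0
      exact hyne s hs.1 hs0
    · exact absurd h (hyne t ht)
    · exact h
  -- part 1
  have part1 : u T 1 = 1 := by
    rwa [abs_of_pos (hypos T hTpos.le)] at hTabs
  have hy01' : u 0 1 < 1 := by rw [h01]; linarith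
  -- part 2
  have part2 : ∀ s ∈ Set.Ioo 0 T, u s 1 ∈ Set.Ioo (0:ℝ) 1 := by
    intro s hs
    refine ⟨hypos s hs.1.le, ?_⟩
    by_contra hge
    push_neg at hge
    have hmem1 : (1:ℝ) ∈ Icc ((fun s => u s 1) 0) ((fun s => u s 1) s) := ⟨hy01'.le, hge⟩
    obtain ⟨s', hs', h1⟩ := intermediate_value_Icc hs.1.le hycont.continuousOn hmem1
    change u s' 1 = 1 at h1
    have hs'pos : 0 < s' := by
      rcases hs'.1.lt_or_eq with h' | h'
      · exact h'
      · exfalso; rw [← h'] at h1; rw [h1] at hy01'; exact lt_irrefl _ hy01'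
    have hmem : s' ∈ {t : ℝ | 0 < t ∧ |u t 1| = 1} :=
      ⟨hs'pos, by rw [abs_of_pos (hypos s' hs'.1), h1]⟩
    have := hTleast hmem
    linarith [hs'.2, hs.2]
  refine ⟨part1, part2, ?_⟩
  -- part 3: lower bound on T
  have hspeed : ∀ t, 0 ≤ t → (u' t 1)^2 ≤ 2 * Real.exp (-(1/(u t 1)^2)) := by
    intro t ht
    have h2 := hEneg t ht
    rw [hEdef] at h2
    have h3 := vpot_lower (u t)
    have h4 : (u' t 1)^2 ≤ (inner ℝ (u' t) (u' t) : ℝ) := by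
      rw [real_inner_self_eq_norm_sq]
      have h5 := abs_coord_le (u' t) 1
      nlinarith [abs_nonneg (u' t 1), norm_nonneg (u' t), sq_abs (u' t 1)]
    simp only at h2
    linarith
  set c : ℝ := Real.sqrt (2 * Real.exp (-(1/(4*y0^2)))) with hcdef
  have hc : 0 < c := Real.sqrt_pos.mpr (by positivity)
  -- first time reaching 2*y0
  set S : Set ℝ := Icc 0 T ∩ {t : ℝ | u t 1 = 2*y0} with hSdef
  have hSne : S.Nonempty := by
    have hmem2 : (2*y0) ∈ Icc ((fun s => u s 1) 0) ((fun s => u s 1) T) := by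
      constructor
      · show u 0 1 ≤ 2*y0
        rw [h01]; linarith
      · show 2*y0 ≤ u T 1
        rw [part1]; linarith
    obtain ⟨σ₀, hσ₀, hσ₀eq⟩ := intermediate_value_Icc hTpos.le hycont.continuousOn hmem2
    exact ⟨σ₀, hσ₀, hσ₀eq⟩
  have hSclosed : IsClosed S :=
    isClosed_Icc.inter (isClosed_eq hycont continuous_const)
  have hSbdd : BddBelow S := ⟨0, fun t ht => ht.1.1⟩
  set σ : ℝ := sInf S with hσdef
  have hσS : σ ∈ S := hSclosed.csInf_mem hSne hSbdd
  have hσeq : u σ 1 = 2*y0 := hσS.2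
  have hσIcc : σ ∈ Icc 0 T := hσS.1
  have hbd : ∀ t ∈ Icc 0 σ, u t 1 ≤ 2*y0 := by
    intro t ht
    by_contra hgt
    push_neg at hgt
    have hmem3 : (2*y0) ∈ Icc ((fun s => u s 1) 0) ((fun s => u s 1) t) := by
      refine ⟨?_, hgt.le⟩
      show u 0 1 ≤ 2*y0
      rw [h01]; linarith
    obtain ⟨s, hs, hseq⟩ := intermediate_value_Icc ht.1 hycont.continuousOn hmem3
    change u s 1 = 2*y0 at hseq
    have hsS : s ∈ S := ⟨⟨hs.1, le_trans hs.2 (le_trans ht.2 hσIcc.2)⟩, hseq⟩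
    have hσs : σ ≤ s := csInf_le hSbdd hsS
    have hst : s = t := le_antisymm hs.2 (le_trans ht.2 hσs)
    rw [hst] at hseq
    linarith
  have hder_bound : ∀ t ∈ Icc 0 σ, ‖u' t 1‖ ≤ c := by
    intro t ht
    have hpos := hypos t ht.1
    have hle := hbd t ht
    have h1 : (u t 1)^2 ≤ 4*y0^2 := by nlinarith
    have h2 : 1/(4*y0^2) ≤ 1/(u t 1)^2 :=
      one_div_le_one_div_of_le (by positivity) h1
    have h3 : Real.exp (-(1/(u t 1)^2)) ≤ Real.exp (-(1/(4*y0^2))) :=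
      Real.exp_le_exp.mpr (by linarith)
    have h4 := hspeed t ht.1
    rw [Real.norm_eq_abs, ← Real.sqrt_sq_eq_abs, hcdef]
    exact Real.sqrt_le_sqrt (by linarith)
  have hMVT := Convex.norm_image_sub_le_of_norm_hasDerivWithin_le
    (f := fun s => u s 1) (f' := fun s => u' s 1)
    (fun t ht => (hyd t).hasDerivWithinAt) hder_bound (convex_Icc 0 σ)
    (left_mem_Icc.mpr hσIcc.1) (right_mem_Icc.mpr hσIcc.1)
  change ‖u σ 1 - u 0 1‖ ≤ c * ‖σ - 0‖ at hMVT
  rw [hσeq, h01] at hMVT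
  have hσ0 : ‖(2*y0 - y0 : ℝ)‖ = y0 := by
    rw [Real.norm_eq_abs, abs_of_pos (by linarith)]; ring
  rw [hσ0] at hMVT
  have hσnorm : ‖σ - 0‖ = σ := by rw [sub_zero, Real.norm_eq_abs, abs_of_nonneg hσIcc.1]
  rw [hσnorm] at hMVT
  calc y0 / c ≤ σ := by rw [div_le_iff₀ hc]; linarith
    _ ≤ T := hσIcc.2

/-- first hitting times t_n of |y| = 1 satisfy u_n²(t_n) = 1,
u_n² ∈ (0,1) before t_n, and t_n → ∞. -/
theorem stmt_12 (un un' un'' : ℕ → ℝ → EuclideanSpace ℝ (Fin 2))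
    (hu : ∀ n t, HasDerivAt (un n) (un' n t) t)
    (hu' : ∀ n t, HasDerivAt (un' n) (un'' n t) t)
    (hode : ∀ n, 1 ≤ n → ∀ t, 0 ≤ t → un'' n t + un' n t + gradient Vpot (un n t) = 0)
    (h0 : ∀ n, 1 ≤ n → un n 0 0 = Real.pi / 2 ∧ un n 0 1 = 1 / (2 * Real.pi * n))
    (h0' : ∀ n, 1 ≤ n → un' n 0 = 0)
    (tn : ℕ → ℝ)
    (htn : ∀ n, 1 ≤ n → IsLeast {t : ℝ | 0 < t ∧ |un n t 1| = 1} (tn n)) :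
    (∀ n, 1 ≤ n → un n (tn n) 1 = 1) ∧
    (∀ n, 1 ≤ n → ∀ s ∈ Set.Ioo 0 (tn n), un n s 1 ∈ Set.Ioo (0:ℝ) 1) ∧
    Tendsto tn atTop atTop := by
  have key : ∀ n, 1 ≤ n → un n (tn n) 1 = 1 ∧
      (∀ s ∈ Set.Ioo 0 (tn n), un n s 1 ∈ Set.Ioo (0:ℝ) 1) ∧
      (1/(2*Real.pi*n)) / Real.sqrt (2 * Real.exp (-(1/(4*(1/(2*Real.pi*n))^2)))) ≤ tn n := by
    intro n hn
    have hnpos : (0:ℝ) < n := by exact_mod_cast hn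
    have hπ := Real.pi_gt_three
    have hy0 : (0:ℝ) < 1/(2*Real.pi*n) := by positivity
    have hy01 : 2*(1/(2*Real.pi*(n:ℝ))) < 1 := by
      have hn1' : (1:ℝ) ≤ n := by exact_mod_cast hn
      rw [mul_one_div, div_lt_one (by positivity)]
      nlinarith
    have hV0 : Vpot (un n 0) < 0 := by
      obtain ⟨h1, h2⟩ := h0 n hn
      unfold Vpot
      rw [if_neg (by rw [h2]; positivity)]
      rw [h1, h2, one_div_one_div]
      have hs : Real.sin (Real.pi/2 + 2*Real.pi*n) = 1 := by
        rw [show Real.pi/2 + 2*Real.pi*(n:ℝ) = Real.pi/2 + n*(2*Real.pi) by ring,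
          Real.sin_add_nat_mul_two_pi, Real.sin_pi_div_two]
      rw [hs, mul_one, neg_lt, neg_zero]
      exact Real.exp_pos _
    exact main_aux (un n) (un' n) (un'' n) (1/(2*Real.pi*n)) hy0 hy01 (hu n) (hu' n)
      (hode n hn) (h0 n hn).2 (h0' n hn) hV0 (tn n) (htn n hn)
  refine ⟨fun n hn => (key n hn).1, fun n hn => (key n hn).2.1, ?_⟩
  have hmono : (fun n : ℕ => (n:ℝ)) ≤ᶠ[atTop] tn := by
    filter_upwards [eventually_ge_atTop 2] with n hn2
    have hn : 1 ≤ n := le_trans one_le_two hn2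
    have hn2' : (2:ℝ) ≤ (n:ℝ) := by exact_mod_cast hn2
    have hπ := Real.pi_gt_three
    set a : ℝ := 2*Real.pi*(n:ℝ) with hadef
    have ha6 : 6*(n:ℝ) ≤ a := by nlinarith
    have ha12 : (12:ℝ) ≤ a := by nlinarith
    have hapos : 0 < a := by linarith
    -- lower bound from key
    have hkey := (key n hn).2.2
    have hrw' : 1/(4*(1/(2*Real.pi*(n:ℝ)))^2) = (2*Real.pi*(n:ℝ))^2/4 := by
      have hp : (2*Real.pi*(n:ℝ)) ≠ 0 := by positivity
      field_simp
    have hb : (1/a) / Real.sqrt (2 * Real.exp (-(a^2/4))) ≤ tn n := by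
      rw [hrw'] at hkey
      exact hkey
    -- bound the sqrt
    have hsq : Real.sqrt (2 * Real.exp (-(a^2/4))) ≤ 2 * Real.exp (-(a^2/8)) := by
      have h1 : 2 * Real.exp (-(a^2/4)) ≤ (2 * Real.exp (-(a^2/8)))^2 := by
        have he : Real.exp (-(a^2/8)) * Real.exp (-(a^2/8)) = Real.exp (-(a^2/4)) := by
          rw [← Real.exp_add]; ring_nf
        nlinarith [Real.exp_pos (-(a^2/4)), Real.exp_pos (-(a^2/8))]
      calc Real.sqrt (2 * Real.exp (-(a^2/4))) ≤ Real.sqrt ((2 * Real.exp (-(a^2/8)))^2) :=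
            Real.sqrt_le_sqrt h1
        _ = 2 * Real.exp (-(a^2/8)) := Real.sqrt_sq (by positivity)
    have hsqpos : 0 < Real.sqrt (2 * Real.exp (-(a^2/4))) := Real.sqrt_pos.mpr (by positivity)
    have hb2 : Real.exp (a^2/8) / (2*a) ≤ (1/a) / Real.sqrt (2 * Real.exp (-(a^2/4))) := by
      rw [div_le_div_iff₀ (by positivity) hsqpos]
      calc Real.exp (a^2/8) * Real.sqrt (2 * Real.exp (-(a^2/4)))
          ≤ Real.exp (a^2/8) * (2 * Real.exp (-(a^2/8))) := by
            exact mul_le_mul_of_nonneg_left hsq (Real.exp_pos _).le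
        _ = 2 * (Real.exp (a^2/8) * Real.exp (-(a^2/8))) := by ring
        _ = 2 := by rw [← Real.exp_add]; simp
        _ = 1/a * (2*a) := by field_simp
    -- now show (n:ℝ) ≤ exp(a²/8)/(2a)
    have hexp1 : a/4 ≤ Real.exp (a/4) := by linarith [Real.add_one_le_exp (a/4)]
    have hexp2 : (a/4)^4 ≤ Real.exp a := by
      have h2 : Real.exp a = (Real.exp (a/4))^4 := by
        rw [← Real.exp_nat_mul]
        congr 1
        push_cast; ring
      rw [h2]
      exact pow_le_pow_left₀ (by positivity) hexp1 4
    have hexp3 : Real.exp a ≤ Real.exp (a^2/8) := Real.exp_le_exp.mpr (by nlinarith)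
    have ha3 : 864*(n:ℝ) ≤ a^3 := by nlinarith
    have hfinal : (n:ℝ) ≤ Real.exp (a^2/8) / (2*a) := by
      rw [le_div_iff₀ (by positivity)]
      have : (n:ℝ) * (2*a) * 256 ≤ a^4 := by nlinarith
      nlinarith [hexp2, hexp3]
    calc (n:ℝ) ≤ Real.exp (a^2/8) / (2*a) := hfinal
      _ ≤ (1/a) / Real.sqrt (2 * Real.exp (-(a^2/4))) := hb2
      _ ≤ tn n := hb
  exact tendsto_atTop_mono' atTop hmono tendsto_natCast_atTop_atTop
end

section
/- Let V : ℝ² → ℝ be C¹ with V(x,0) = 0 and ∇V(x,y) = 0 iff y = 0, and let v : ℝ → ℝ² be a bounded entire solution of ü + u̇ + ∇V(u) = 0 with E(v,t) ≤ 0 for all t. Then lim_{t→-∞} v²(t) = 0, i.e., the second coordinate of v tends to 0 as t → -∞. -/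
set_option maxHeartbeats 1000000

open Real Set Filter Topology

/-- a bounded entire solution with nonpositive energy has second
coordinate tending to 0 as t → -∞. -/
theorem stmt_14 (V : EuclideanSpace ℝ (Fin 2) → ℝ) (hV : ContDiff ℝ 1 V)
    (hV0 : ∀ p : EuclideanSpace ℝ (Fin 2), p 1 = 0 → V p = 0)
    (hcrit : ∀ p : EuclideanSpace ℝ (Fin 2), gradient V p = 0 ↔ p 1 = 0)
    (v v' v'' : ℝ → EuclideanSpace ℝ (Fin 2))
    (hv : ∀ t, HasDerivAt v (v' t) t) (hv' : ∀ t, HasDerivAt v' (v'' t) t)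
    (hode : ∀ t, v'' t + v' t + gradient V (v t) = 0)
    (hbd : ∃ C, ∀ t, ‖v t‖ ≤ C)
    (hE : ∀ t, (1/2) * ‖v' t‖^2 + V (v t) ≤ 0) :
    Tendsto (fun t => v t 1) atBot (nhds 0) := by
  obtain ⟨C, hC⟩ := hbd
  -- basic continuity facts
  have hvc : Continuous v := continuous_iff_continuousAt.2 fun t => (hv t).continuousAt
  have hv'c : Continuous v' := continuous_iff_continuousAt.2 fun t => (hv' t).continuousAt
  have hgc : Continuous (fun p : EuclideanSpace ℝ (Fin 2) => gradient V p) :=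
    (InnerProductSpace.toDual ℝ (EuclideanSpace ℝ (Fin 2))).symm.continuous.comp
      (hV.continuous_fderiv one_ne_zero)
  have hDrw : ∀ u, v'' u = -v' u - gradient V (v u) := by
    intro u; have := hode u; linear_combination (norm := module) this
  -- bound on V over the closed ball
  obtain ⟨M, hM⟩ : ∃ M, ∀ p : EuclideanSpace ℝ (Fin 2), ‖p‖ ≤ C → |V p| ≤ M := by
    obtain ⟨M, hM⟩ := (isCompact_closedBall (0 : EuclideanSpace ℝ (Fin 2))
      C).exists_bound_of_continuousOn hV.continuous.continuousOn
    exact ⟨M, fun p hp => hM p (by simpa [Metric.mem_closedBall] using hp)⟩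
  have hM0 : 0 ≤ M := by
    have := hM (v 0) (hC 0); linarith [abs_nonneg (V (v 0))]
  -- bound on v'
  set Kv : ℝ := Real.sqrt (2 * M) with hKv
  have hKv0 : 0 ≤ Kv := Real.sqrt_nonneg _
  have hv'b : ∀ t, ‖v' t‖ ≤ Kv := by
    intro t
    rw [hKv, Real.le_sqrt (norm_nonneg _)]
    have h1 := hE t
    have h2 := abs_le.1 (hM (v t) (hC t))
    nlinarith [h2.1]
    linarith
  -- bound on gradient over the ball
  obtain ⟨G, hG0, hG⟩ : ∃ G, 0 ≤ G ∧ ∀ p : EuclideanSpace ℝ (Fin 2), ‖p‖ ≤ C →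
      ‖gradient V p‖ ≤ G := by
    obtain ⟨G, hG⟩ := (isCompact_closedBall (0 : EuclideanSpace ℝ (Fin 2))
      C).exists_bound_of_continuousOn hgc.continuousOn
    exact ⟨max G 0, le_max_right _ _, fun p hp =>
      le_trans (hG p (by simpa [Metric.mem_closedBall] using hp)) (le_max_left _ _)⟩
  have hv''b : ∀ t, ‖v'' t‖ ≤ Kv + G := by
    intro t
    rw [hDrw t]
    calc ‖-v' t - gradient V (v t)‖ ≤ ‖-v' t‖ + ‖gradient V (v t)‖ := norm_sub_le _ _
      _ = ‖v' t‖ + ‖gradient V (v t)‖ := by rw [norm_neg]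
      _ ≤ Kv + G := add_le_add (hv'b t) (hG (v t) (hC t))
  -- the energy and its derivative
  set Efun : ℝ → ℝ := fun t => (1/2) * ‖v' t‖^2 + V (v t) with hEfun
  have hEderiv : ∀ t, HasDerivAt Efun (-‖v' t‖^2) t := by
    intro t
    have hg : HasGradientAt V (gradient V (v t)) (v t) :=
      ((hV.differentiable one_ne_zero) (v t)).hasGradientAt
    have h2 : HasDerivAt (fun s => V (v s)) (inner ℝ (gradient V (v t)) (v' t) : ℝ) t := by
      exact hg.hasFDerivAt.comp_hasDerivAt t (hv t)
    have h1 : HasDerivAt (fun s => (inner ℝ (v' s) (v' s) : ℝ))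
        (inner ℝ (v' t) (v'' t) + inner ℝ (v'' t) (v' t) : ℝ) t := (hv' t).inner ℝ (hv' t)
    have h1' : HasDerivAt (fun s => (1/2) * ‖v' s‖^2) (inner ℝ (v'' t) (v' t) : ℝ) t := by
      have heq : (fun s => (1/2 : ℝ) * ‖v' s‖^2) = fun s => (1/2) * (inner ℝ (v' s) (v' s) : ℝ) := by
        ext s; rw [real_inner_self_eq_norm_sq]
      rw [heq]
      have := h1.const_mul (1/2 : ℝ)
      refine this.congr_deriv ?_
      rw [real_inner_comm (v'' t)]
      ring
    have hsum := h1'.add h2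
    refine hsum.congr_deriv ?_
    rw [hDrw t, inner_sub_left, inner_neg_left, real_inner_self_eq_norm_sq]
    ring
  have hEanti : Antitone Efun := by
    apply antitone_of_deriv_nonpos (fun t => (hEderiv t).differentiableAt)
    intro t
    rw [(hEderiv t).deriv]
    nlinarith [sq_nonneg ‖v' t‖]
  obtain ⟨L, hL⟩ : ∃ L, Tendsto Efun atBot (𝓝 L) :=
    ⟨⨆ t, Efun t, tendsto_atBot_ciSup hEanti ⟨0, by rintro x ⟨t, rfl⟩; exact hE t⟩⟩
  -- FTC for the energy
  have hFTC : ∀ s t : ℝ, s ≤ t → (∫ u in s..t, ‖v' u‖^2) = Efun s - Efun t := by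
    intro s t _
    have hint : IntervalIntegrable (fun u => -‖v' u‖^2) MeasureTheory.volume s t :=
      (Continuous.neg (by continuity)).intervalIntegrable s t
    have := intervalIntegral.integral_eq_sub_of_hasDerivAt (fun u _ => hEderiv u) hint
    rw [intervalIntegral.integral_neg] at this
    linarith [this]
  -- Lipschitz bound for ‖v'‖²
  set Lc : ℝ := 2 * Kv * (Kv + G) + 1 with hLcdef
  have hLc0 : 0 < Lc := by positivity
  have hlip : ∀ s t : ℝ, |‖v' t‖^2 - ‖v' s‖^2| ≤ Lc * |t - s| := by
    intro s t
    have hφ : ∀ u : ℝ, HasDerivAt (fun w => ‖v' w‖^2)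
        ((inner ℝ (v' u) (v'' u) : ℝ) + inner ℝ (v'' u) (v' u)) u := by
      intro u
      have h1 : HasDerivAt (fun w => (inner ℝ (v' w) (v' w) : ℝ))
          (inner ℝ (v' u) (v'' u) + inner ℝ (v'' u) (v' u) : ℝ) u := (hv' u).inner ℝ (hv' u)
      have heq : (fun w => ‖v' w‖^2) = fun w => (inner ℝ (v' w) (v' w) : ℝ) := by
        ext w; rw [real_inner_self_eq_norm_sq]
      rw [heq]; exact h1
    have hb : ∀ u ∈ (univ : Set ℝ), ‖(inner ℝ (v' u) (v'' u) : ℝ) + inner ℝ (v'' u) (v' u)‖ ≤ Lc := by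
      intro u _
      have h1 : |(inner ℝ (v' u) (v'' u) : ℝ)| ≤ Kv * (Kv + G) := by
        calc |(inner ℝ (v' u) (v'' u) : ℝ)| ≤ ‖v' u‖ * ‖v'' u‖ := abs_real_inner_le_norm _ _
          _ ≤ Kv * (Kv + G) := mul_le_mul (hv'b u) (hv''b u) (norm_nonneg _) hKv0
      have h2 : |(inner ℝ (v'' u) (v' u) : ℝ)| ≤ Kv * (Kv + G) := by
        rw [real_inner_comm]; exact h1
      have := abs_add_le (inner ℝ (v' u) (v'' u) : ℝ) (inner ℝ (v'' u) (v' u))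
      rw [Real.norm_eq_abs, hLcdef]
      nlinarith
    have := Convex.norm_image_sub_le_of_norm_hasDerivWithin_le
      (fun u _ => (hφ u).hasDerivWithinAt) hb convex_univ (mem_univ s) (mem_univ t)
    simpa [Real.norm_eq_abs] using this
  -- v' tends to 0 at -∞ (a quantitative Barbălat argument)
  have hv'0 : Tendsto (fun t => ‖v' t‖) atBot (𝓝 0) := by
    have key : ∀ ε > (0:ℝ), ∀ᶠ t in atBot, ‖v' t‖^2 < ε := by
      intro ε hε
      set h : ℝ := min 1 (ε / (2 * Lc)) with hh
      have hh0 : 0 < h := lt_min one_pos (by positivity)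
      have hh1 : h ≤ 1 := min_le_left _ _
      have hhL : Lc * h ≤ ε / 2 := by
        have : h ≤ ε / (2 * Lc) := min_le_right _ _
        calc Lc * h ≤ Lc * (ε / (2 * Lc)) := by nlinarith
          _ = ε / 2 := by field_simp
      have htail : ∀ᶠ t in atBot, |Efun t - L| < h * ε / 8 := by
        have := Metric.tendsto_nhds.1 hL (h * ε / 8) (by positivity)
        simpa [Real.dist_eq] using this
      obtain ⟨T₀, hT₀⟩ := eventually_atBot.1 htail
      rw [eventually_atBot]
      refine ⟨T₀ - 1, fun t₀ ht₀ => ?_⟩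
      by_contra hcon
      push_neg at hcon
      have hle : t₀ ≤ t₀ + h := by linarith
      have hlow : ∀ u ∈ Icc t₀ (t₀ + h), ε / 2 ≤ ‖v' u‖^2 := by
        intro u hu
        have h1 := hlip t₀ u
        have h2 : |u - t₀| ≤ h := by
          rw [abs_of_nonneg (by linarith [hu.1])]; linarith [hu.2]
        have : |‖v' u‖^2 - ‖v' t₀‖^2| ≤ ε / 2 := by
          calc |‖v' u‖^2 - ‖v' t₀‖^2| ≤ Lc * |u - t₀| := h1
            _ ≤ Lc * h := by nlinarith
            _ ≤ ε / 2 := hhL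
        have := abs_le.1 this
        linarith [this.1]
      have hint : IntervalIntegrable (fun u => ‖v' u‖^2) MeasureTheory.volume t₀ (t₀ + h) :=
        (by continuity : Continuous fun u => ‖v' u‖^2).intervalIntegrable _ _
      have hmono : (∫ _ in t₀..(t₀ + h), (ε/2 : ℝ)) ≤ ∫ u in t₀..(t₀ + h), ‖v' u‖^2 :=
        intervalIntegral.integral_mono_on hle intervalIntegrable_const hint hlow
      rw [intervalIntegral.integral_const, smul_eq_mul] at hmono
      have hval : (∫ u in t₀..(t₀ + h), ‖v' u‖^2) = Efun t₀ - Efun (t₀ + h) := hFTC _ _ hle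
      have hb1 : |Efun t₀ - L| < h * ε / 8 := hT₀ t₀ (by linarith)
      have hb2 : |Efun (t₀ + h) - L| < h * ε / 8 := hT₀ _ (by linarith)
      have h3 : Efun t₀ - Efun (t₀ + h) < h * ε / 4 := by
        rcases abs_lt.1 hb1 with ⟨a1, a2⟩
        rcases abs_lt.1 hb2 with ⟨b1, b2⟩
        linarith
      have : (t₀ + h - t₀) * (ε/2) ≤ Efun t₀ - Efun (t₀ + h) := by rw [← hval]; exact hmono
      nlinarith
    have hφ : Tendsto (fun t => ‖v' t‖^2) atBot (𝓝 0) := by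
      rw [Metric.tendsto_nhds]
      intro ε hε
      filter_upwards [key ε hε] with t ht
      rw [Real.dist_eq, sub_zero, abs_of_nonneg (by positivity)]
      exact ht
    have := hφ.sqrt
    simpa [Real.sqrt_sq (norm_nonneg _)] using this
  -- the gradient along v tends to 0 at -∞
  have hgrad0 : Tendsto (fun t => ‖gradient V (v t)‖) atBot (𝓝 0) := by
    rw [Metric.tendsto_nhds]
    intro δ hδ
    have hucont : UniformContinuousOn (fun p => gradient V p)
        (Metric.closedBall (0:EuclideanSpace ℝ (Fin 2)) C) :=
      (isCompact_closedBall _ _).uniformContinuousOn_of_continuous hgc.continuousOn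
    obtain ⟨r, hr0, hr⟩ := Metric.uniformContinuousOn_iff.1 hucont (δ/4) (by positivity)
    set η : ℝ := min (δ/16) (r/2) with hη
    have hη0 : 0 < η := lt_min (by positivity) (by positivity)
    obtain ⟨T, hT⟩ := eventually_atBot.1 (Metric.tendsto_nhds.1 hv'0 η hη0)
    have hT' : ∀ u ≤ T, ‖v' u‖ < η := by
      intro u hu
      have := hT u hu
      rwa [Real.dist_eq, sub_zero, abs_of_nonneg (norm_nonneg _)] at this
    rw [eventually_atBot]
    refine ⟨T - 1, fun t₀ ht₀ => ?_⟩
    set e : EuclideanSpace ℝ (Fin 2) := gradient V (v t₀) with he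
    rw [Real.dist_eq, sub_zero, abs_of_nonneg (norm_nonneg _)]
    have hIT : ∀ u ∈ Icc t₀ (t₀ + 1), ‖v' u‖ < η := fun u hu => hT' u (by linarith [hu.2])
    have hmove : ∀ u ∈ Icc t₀ (t₀ + 1), ‖v u - v t₀‖ ≤ η := by
      intro u hu
      have := Convex.norm_image_sub_le_of_norm_hasDerivWithin_le
        (f := v) (f' := v') (fun w _ => (hv w).hasDerivWithinAt)
        (fun w hw => (hIT w hw).le) (convex_Icc t₀ (t₀+1)) (left_mem_Icc.2 (by linarith)) hu
      calc ‖v u - v t₀‖ ≤ η * ‖u - t₀‖ := this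
        _ ≤ η * 1 := by
            have : |u - t₀| ≤ 1 := by rw [abs_of_nonneg (by linarith [hu.1])]; linarith [hu.2]
            rw [Real.norm_eq_abs]; nlinarith
        _ = η := mul_one _
    have hgcl : ∀ u ∈ Icc t₀ (t₀ + 1), ‖gradient V (v u) - e‖ ≤ δ/4 := by
      intro u hu
      have h1 : v u ∈ Metric.closedBall (0:EuclideanSpace ℝ (Fin 2)) C := by
        simpa [Metric.mem_closedBall] using hC u
      have h2 : v t₀ ∈ Metric.closedBall (0:EuclideanSpace ℝ (Fin 2)) C := by
        simpa [Metric.mem_closedBall] using hC t₀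
      have h3 : dist (v u) (v t₀) < r := by
        rw [dist_eq_norm]
        calc ‖v u - v t₀‖ ≤ η := hmove u hu
          _ ≤ r/2 := min_le_right _ _
          _ < r := by linarith
      have := hr (v u) h1 (v t₀) h2 h3
      rw [dist_eq_norm] at this
      exact this.le
    have hfd : ∀ u : ℝ, HasDerivAt (fun w => (inner ℝ (v' w) e : ℝ)) (inner ℝ (v'' u) e : ℝ) u := by
      intro u
      have := (hv' u).inner ℝ (hasDerivAt_const u e)
      simpa using this
    have hintg : IntervalIntegrable (fun u => (inner ℝ (v'' u) e : ℝ))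
        MeasureTheory.volume t₀ (t₀+1) := by
      have heq : (fun u => (inner ℝ (v'' u) e : ℝ)) =
          fun u => (inner ℝ (-v' u - gradient V (v u)) e : ℝ) := by
        ext u; rw [hDrw u]
      rw [heq]
      exact (Continuous.inner ((hv'c.neg).sub (hgc.comp hvc)) continuous_const).intervalIntegrable _ _
    have hFTCe : (∫ u in t₀..(t₀+1), (inner ℝ (v'' u) e : ℝ)) =
        (inner ℝ (v' (t₀+1)) e : ℝ) - inner ℝ (v' t₀) e :=
      intervalIntegral.integral_eq_sub_of_hasDerivAt (fun u _ => hfd u) hintg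
    have hint1 : IntervalIntegrable (fun u => (inner ℝ (v' u) e : ℝ))
        MeasureTheory.volume t₀ (t₀+1) :=
      (Continuous.inner hv'c continuous_const).intervalIntegrable _ _
    have hint2 : IntervalIntegrable (fun u => (inner ℝ (gradient V (v u)) e : ℝ))
        MeasureTheory.volume t₀ (t₀+1) :=
      (Continuous.inner (hgc.comp hvc) continuous_const).intervalIntegrable _ _
    have hsplit : (∫ u in t₀..(t₀+1), (inner ℝ (v'' u) e : ℝ)) =
        -(∫ u in t₀..(t₀+1), (inner ℝ (v' u) e : ℝ)) -
          ∫ u in t₀..(t₀+1), (inner ℝ (gradient V (v u)) e : ℝ) := by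
      have hcg : (∫ u in t₀..(t₀+1), (inner ℝ (v'' u) e : ℝ)) =
          ∫ u in t₀..(t₀+1), (-(inner ℝ (v' u) e : ℝ) - inner ℝ (gradient V (v u)) e) := by
        apply intervalIntegral.integral_congr
        intro u _
        simp only [hDrw u, inner_sub_left, inner_neg_left]
      rw [hcg]
      have h4 := intervalIntegral.integral_sub hint1.neg hint2
      simp only [Pi.neg_apply] at h4
      rw [h4, intervalIntegral.integral_neg]
    have hb1 : |∫ u in t₀..(t₀+1), (inner ℝ (v' u) e : ℝ)| ≤ η * ‖e‖ := by
      have := intervalIntegral.norm_integral_le_of_norm_le_const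
        (C := η * ‖e‖) (f := fun u => (inner ℝ (v' u) e : ℝ)) (a := t₀) (b := t₀ + 1) ?_
      · simpa [Real.norm_eq_abs] using this
      · intro u hu
        rw [Set.uIoc_of_le (by linarith : t₀ ≤ t₀ + 1)] at hu
        have hmem : u ∈ Icc t₀ (t₀+1) := ⟨hu.1.le, hu.2⟩
        calc ‖(inner ℝ (v' u) e : ℝ)‖ ≤ ‖v' u‖ * ‖e‖ := norm_inner_le_norm _ _
          _ ≤ η * ‖e‖ := by nlinarith [hIT u hmem, norm_nonneg (v' u), norm_nonneg e]
    have hsplit2 : (∫ u in t₀..(t₀+1), (inner ℝ (gradient V (v u)) e : ℝ)) =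
        ‖e‖^2 + ∫ u in t₀..(t₀+1), (inner ℝ (gradient V (v u) - e) e : ℝ) := by
      have hint3 : IntervalIntegrable (fun u => (inner ℝ (gradient V (v u) - e) e : ℝ))
          MeasureTheory.volume t₀ (t₀+1) :=
        (Continuous.inner ((hgc.comp hvc).sub continuous_const)
          continuous_const).intervalIntegrable _ _
      have heq : (∫ u in t₀..(t₀+1), (inner ℝ (gradient V (v u)) e : ℝ)) =
          ∫ u in t₀..(t₀+1), ((inner ℝ e e : ℝ) + inner ℝ (gradient V (v u) - e) e) := by
        apply intervalIntegral.integral_congr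
        intro u _
        simp only [inner_sub_left]
        ring
      rw [heq, intervalIntegral.integral_add intervalIntegrable_const hint3,
        intervalIntegral.integral_const, real_inner_self_eq_norm_sq]
      simp
    have hb2 : |∫ u in t₀..(t₀+1), (inner ℝ (gradient V (v u) - e) e : ℝ)| ≤ (δ/4) * ‖e‖ := by
      have := intervalIntegral.norm_integral_le_of_norm_le_const
        (C := (δ/4) * ‖e‖) (f := fun u => (inner ℝ (gradient V (v u) - e) e : ℝ))
        (a := t₀) (b := t₀ + 1) ?_
      · simpa [Real.norm_eq_abs] using this
      · intro u hu
        rw [Set.uIoc_of_le (by linarith : t₀ ≤ t₀ + 1)] at hu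
        have hmem : u ∈ Icc t₀ (t₀+1) := ⟨hu.1.le, hu.2⟩
        calc ‖(inner ℝ (gradient V (v u) - e) e : ℝ)‖
            ≤ ‖gradient V (v u) - e‖ * ‖e‖ := norm_inner_le_norm _ _
          _ ≤ (δ/4) * ‖e‖ := by
              nlinarith [hgcl u hmem, norm_nonneg (gradient V (v u) - e), norm_nonneg e]
    have hend1 : |(inner ℝ (v' (t₀+1)) e : ℝ)| ≤ η * ‖e‖ := by
      calc |(inner ℝ (v' (t₀+1)) e : ℝ)| ≤ ‖v' (t₀+1)‖ * ‖e‖ := abs_real_inner_le_norm _ _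
        _ ≤ η * ‖e‖ := by
            nlinarith [hIT (t₀+1) (right_mem_Icc.2 (by linarith)),
              norm_nonneg (v' (t₀+1)), norm_nonneg e]
    have hend2 : |(inner ℝ (v' t₀) e : ℝ)| ≤ η * ‖e‖ := by
      calc |(inner ℝ (v' t₀) e : ℝ)| ≤ ‖v' t₀‖ * ‖e‖ := abs_real_inner_le_norm _ _
        _ ≤ η * ‖e‖ := by
            nlinarith [hIT t₀ (left_mem_Icc.2 (by linarith)), norm_nonneg (v' t₀), norm_nonneg e]
    have hkey : ‖e‖^2 ≤ 3 * η * ‖e‖ + (δ/4) * ‖e‖ := by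
      have h1 := hFTCe
      rw [hsplit] at h1
      have hB : (∫ u in t₀..(t₀+1), (inner ℝ (gradient V (v u)) e : ℝ)) =
          -(∫ u in t₀..(t₀+1), (inner ℝ (v' u) e : ℝ)) -
            ((inner ℝ (v' (t₀+1)) e : ℝ) - inner ℝ (v' t₀) e) := by
        linarith [h1]
      rw [hsplit2] at hB
      rcases abs_le.1 hb1 with ⟨c1, c2⟩
      rcases abs_le.1 hb2 with ⟨d1, d2⟩
      rcases abs_le.1 hend1 with ⟨e1, e2⟩
      rcases abs_le.1 hend2 with ⟨f1, f2⟩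
      nlinarith
    have hηδ : η ≤ δ/16 := min_le_left _ _
    rcases eq_or_lt_of_le (norm_nonneg e) with h0 | h0
    · rw [← h0]; exact hδ
    · have : ‖e‖ ≤ 3 * η + δ/4 := by nlinarith [hkey, h0, sq_abs ‖e‖]
      calc ‖e‖ ≤ 3 * η + δ/4 := this
        _ ≤ 3 * (δ/16) + δ/4 := by linarith
        _ < δ := by linarith
  -- conclusion via compactness
  rw [Metric.tendsto_nhds]
  intro ε hε
  set S : Set (EuclideanSpace ℝ (Fin 2)) := {p | ‖p‖ ≤ C ∧ ε ≤ |p 1|} with hS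
  have hclosed : IsClosed S := by
    apply IsClosed.inter
    · exact isClosed_le continuous_norm continuous_const
    · exact isClosed_le continuous_const
        (continuous_abs.comp ((EuclideanSpace.proj (1 : Fin 2)).continuous))
  have hcpt : IsCompact S := by
    apply (isCompact_closedBall (0 : EuclideanSpace ℝ (Fin 2)) C).of_isClosed_subset hclosed
    intro p hp
    simpa [Metric.mem_closedBall] using hp.1
  obtain ⟨δ₀, hδ₀0, hδ₀⟩ : ∃ δ₀ > 0, ∀ p ∈ S, δ₀ ≤ ‖gradient V p‖ := by
    rcases eq_empty_or_nonempty S with hemp | hne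
    · exact ⟨1, one_pos, by rw [hemp]; simp⟩
    · obtain ⟨p₀, hp₀S, hp₀min⟩ := hcpt.exists_isMinOn hne (hgc.norm.continuousOn)
      refine ⟨‖gradient V p₀‖, ?_, fun p hp => hp₀min hp⟩
      rcases eq_or_lt_of_le (norm_nonneg (gradient V p₀)) with h0 | h0
      · exfalso
        have hz : gradient V p₀ = 0 := by
          rw [← norm_eq_zero]; exact h0.symm
        have hz1 : (p₀ : EuclideanSpace ℝ (Fin 2)) 1 = 0 := (hcrit p₀).1 hz
        have h2 := hp₀S.2
        rw [hz1] at h2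
        simp only [abs_zero] at h2
        linarith
      · exact h0
  filter_upwards [Metric.tendsto_nhds.1 hgrad0 δ₀ hδ₀0] with t ht
  rw [Real.dist_eq, sub_zero, abs_of_nonneg (norm_nonneg _)] at ht
  rw [Real.dist_eq, sub_zero]
  by_contra hcon
  push_neg at hcon
  exact absurd (hδ₀ (v t) ⟨hC t, hcon⟩) (by linarith)
end

section
/- Let V(x,y) = -exp(-1/y²)·sin(x + 1/y) for y ≠ 0 and V(x,0) = 0. The zero set Z = {(x,y) : V(x,y) = 0, y ≠ 0} consists of the curves y = 1/(kπ - x) (for integers k, where x + 1/y ∈ πℤ); in particular, for every x₀ ∈ ℝ and ε > 0, any continuous path γ : [a,b] → ℝ × (0,∞) with γ²(a) < ε' and γ²(b) ≥ 1 (for suitable ε' depending on x₀, ε) that avoids Z must cross the vertical segment {x₀ + 2πℤ} × (0, ε). -/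
open Real Set Filter Topology

/-- The potential as a function of two real variables:
V(x,y) = -exp(-1/y²)·sin(x + 1/y) for y ≠ 0 and V(x,0) = 0. -/
noncomputable def Vfun (x y : ℝ) : ℝ :=
  if y = 0 then 0 else -Real.exp (-(1 / y^2)) * Real.sin (x + 1 / y)

/-- the zero set of V off {y = 0} is {x + 1/y ∈ πℤ}, and any
continuous path in the upper half plane avoiding it that goes from very small
height to height ≥ 1 must cross the vertical segment {x₀ + 2πℤ} × (0, ε). -/
theorem stmt_15 :
    (∀ x y : ℝ, y ≠ 0 → (Vfun x y = 0 ↔ ∃ k : ℤ, x + 1 / y = k * Real.pi)) ∧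
    ∀ x₀ ε : ℝ, 0 < ε → ∃ ε' > (0:ℝ),
      ∀ a b : ℝ, a ≤ b → ∀ γ : ℝ → ℝ × ℝ, ContinuousOn γ (Set.Icc a b) →
        (∀ t ∈ Set.Icc a b, 0 < (γ t).2) →
        (γ a).2 < ε' → 1 ≤ (γ b).2 →
        (∀ t ∈ Set.Icc a b, Vfun (γ t).1 (γ t).2 ≠ 0) →
        ∃ t ∈ Set.Icc a b, (∃ k : ℤ, (γ t).1 = x₀ + 2 * Real.pi * k) ∧ (γ t).2 < ε := by
  have hπ : (0:ℝ) < π := Real.pi_pos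
  have part1 : ∀ x y : ℝ, y ≠ 0 → (Vfun x y = 0 ↔ ∃ k : ℤ, x + 1 / y = k * Real.pi) := by
    intro x y hy
    rw [Vfun, if_neg hy, neg_mul, neg_eq_zero, mul_eq_zero]
    simp only [Real.exp_ne_zero, false_or]
    rw [Real.sin_eq_zero_iff]
    constructor
    · rintro ⟨n, hn⟩; exact ⟨n, hn.symm⟩
    · rintro ⟨n, hn⟩; exact ⟨n, hn.symm⟩
  refine ⟨part1, ?_⟩
  intro x₀ ε hε
  set ε₁ : ℝ := min ε 1 with hε₁def
  have hε₁pos : 0 < ε₁ := lt_min hε one_pos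
  have hε₁le : ε₁ ≤ ε := min_le_left _ _
  have hε₁le1 : ε₁ ≤ 1 := min_le_right _ _
  set ε' : ℝ := (1/ε₁ + 4*π)⁻¹ with hε'def
  have hden : 0 < 1/ε₁ + 4*π := by positivity
  have hε'pos : 0 < ε' := inv_pos.mpr hden
  refine ⟨ε', hε'pos, ?_⟩
  intro a b hab γ hγ hpos ha hb hV
  set g : ℝ → ℝ := fun t => (γ t).2 with hgdef
  set xx : ℝ → ℝ := fun t => (γ t).1 with hxxdef
  set f : ℝ → ℝ := fun t => (γ t).1 + 1/(γ t).2 with hfdef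
  have hgc : ContinuousOn g (Icc a b) := continuous_snd.comp_continuousOn hγ
  have hxc : ContinuousOn xx (Icc a b) := continuous_fst.comp_continuousOn hγ
  have hne0 : ∀ t ∈ Icc a b, g t ≠ 0 := fun t ht => (hpos t ht).ne'
  have hfc : ContinuousOn f (Icc a b) := hxc.add (continuousOn_const.div hgc hne0)
  have hne : ∀ t ∈ Icc a b, ∀ k : ℤ, f t ≠ k * π := by
    intro t ht k hk
    exact hV t ht ((part1 _ _ (hne0 t ht)).mpr ⟨k, hk⟩)
  have ha_mem : a ∈ Icc a b := left_mem_Icc.mpr hab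
  have hb_mem : b ∈ Icc a b := right_mem_Icc.mpr hab
  -- ε' < ε₁
  have hε'lt : ε' < ε₁ := by
    have h1 : 1/ε₁ < 1/ε₁ + 4*π := by linarith
    calc ε' = (1/ε₁ + 4*π)⁻¹ := hε'def
    _ < (1/ε₁)⁻¹ := by
        apply inv_strictAnti₀ (by positivity)
        linarith
    _ = ε₁ := by rw [one_div, inv_inv]
  have hga : g a < ε₁ := lt_trans ha hε'lt
  -- first time height reaches ε₁
  set S : Set ℝ := Icc a b ∩ g ⁻¹' (Ici ε₁) with hSdef
  have hScl : IsClosed S := hgc.preimage_isClosed_of_isClosed isClosed_Icc isClosed_Ici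
  have hbS : b ∈ S := ⟨hb_mem, le_trans hε₁le1 hb⟩
  have hSbdd : BddBelow S := ⟨a, fun t ht => ht.1.1⟩
  set t₁ : ℝ := sInf S with ht₁def
  have ht₁S : t₁ ∈ S := hScl.csInf_mem ⟨b, hbS⟩ hSbdd
  have ht₁min : ∀ s ∈ S, t₁ ≤ s := fun s hs => csInf_le hSbdd hs
  have ht₁ab : t₁ ∈ Icc a b := ht₁S.1
  have ht₁a : a ≤ t₁ := ht₁ab.1
  have hsub₁ : Icc a t₁ ⊆ Icc a b := Icc_subset_Icc le_rfl ht₁ab.2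
  have hgt₁ : g t₁ = ε₁ := by
    obtain ⟨s, hs, hgs⟩ := intermediate_value_Icc ht₁a (hgc.mono hsub₁) ⟨hga.le, ht₁S.2⟩
    have hsS : s ∈ S := ⟨⟨hs.1, hs.2.trans ht₁ab.2⟩, hgs.ge⟩
    have : s = t₁ := le_antisymm hs.2 (ht₁min s hsS)
    rw [← this]; exact hgs
  -- f stays in one period interval
  set k : ℤ := ⌊f a / π⌋ with hkdef
  have hk1 : (k:ℝ)*π < f a := by
    have h := Int.floor_le (f a / π)
    have h2 : (k:ℝ)*π ≤ f a := (le_div_iff₀ hπ).mp h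
    exact lt_of_le_of_ne h2 (fun h3 => hne a ha_mem k h3.symm)
  have hk2 : f a < ((k:ℝ)+1)*π := by
    have h := Int.lt_floor_add_one (f a / π)
    exact (div_lt_iff₀ hπ).mp h
  have hlow : ∀ t ∈ Icc a b, (k:ℝ)*π < f t := by
    intro t ht
    by_contra h
    push_neg at h
    have hsub : Icc a t ⊆ Icc a b := Icc_subset_Icc le_rfl ht.2
    obtain ⟨s, hs, hfs⟩ := intermediate_value_Icc' ht.1 (hfc.mono hsub) ⟨h, hk1.le⟩
    exact hne s (hsub hs) k hfs
  have hhigh : ∀ t ∈ Icc a b, f t < ((k:ℝ)+1)*π := by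
    intro t ht
    by_contra h
    push_neg at h
    have hsub : Icc a t ⊆ Icc a b := Icc_subset_Icc le_rfl ht.2
    obtain ⟨s, hs, hfs⟩ := intermediate_value_Icc ht.1 (hfc.mono hsub) ⟨hk2.le, h⟩
    refine hne s (hsub hs) (k+1) ?_
    push_cast
    exact hfs
  -- bounds on xx a and xx t₁
  have hfa : f a = xx a + 1/(g a) := rfl
  have hft₁ : f t₁ = xx t₁ + 1/(g t₁) := rfl
  have h1ga : 1/ε₁ + 4*π < 1/(g a) := by
    have h := one_div_lt_one_div_of_lt (hpos a ha_mem) ha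
    have : 1/ε' = 1/ε₁ + 4*π := by rw [hε'def, one_div, inv_inv]
    linarith
  have hgap : xx t₁ - xx a > 3*π := by
    have h1 := hlow t₁ ht₁ab
    have h2 := hk2
    have h3 : 1/(g t₁) = 1/ε₁ := by rw [hgt₁]
    have h4 : xx t₁ = f t₁ - 1/ε₁ := by rw [hft₁, h3]; ring
    have h5 : xx a = f a - 1/(g a) := by rw [hfa]; ring
    have he : ((k:ℝ)+1)*π = (k:ℝ)*π + π := by ring
    have key : xx t₁ - xx a = (f t₁ - f a) + (1/(g a) - 1/(g t₁)) := by
      rw [hfa, hft₁]; ring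
    rw [key, h3]
    clear_value f g xx t₁ S k ε₁ ε'
    linarith [h1, h2, he, h1ga]
  -- find the integer multiple
  set k₂ : ℤ := ⌊(xx a - x₀)/(2*π)⌋ + 1 with hk₂def
  have h2π : (0:ℝ) < 2*π := by linarith
  have hk₂cast : ((k₂:ℤ):ℝ) = ((⌊(xx a - x₀)/(2*π)⌋:ℤ):ℝ) + 1 := by push_cast [hk₂def]; ring
  have hc1 : xx a < x₀ + 2*π*k₂ := by
    have h := Int.lt_floor_add_one ((xx a - x₀)/(2*π))
    rw [div_lt_iff₀ h2π] at h
    rw [hk₂cast]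
    nlinarith
  have hc2 : x₀ + 2*π*k₂ < xx t₁ := by
    have h := Int.floor_le ((xx a - x₀)/(2*π))
    have h' := (le_div_iff₀ h2π).mp h
    rw [hk₂cast]
    nlinarith
  obtain ⟨t₂, ht₂, hxt₂⟩ := intermediate_value_Icc ht₁a (hxc.mono hsub₁) ⟨hc1.le, hc2.le⟩
  have ht₂lt : t₂ < t₁ := by
    rcases lt_or_eq_of_le ht₂.2 with h | h
    · exact h
    · exfalso; rw [h] at hxt₂; linarith
  have hgt₂ : g t₂ < ε₁ := by
    by_contra h
    push_neg at h
    have : t₂ ∈ S := ⟨⟨ht₂.1, ht₂.2.trans ht₁ab.2⟩, h⟩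
    exact absurd (ht₁min t₂ this) (not_le.mpr ht₂lt)
  exact ⟨t₂, ⟨ht₂.1, ht₂.2.trans ht₁ab.2⟩, ⟨k₂, hxt₂⟩, lt_of_lt_of_le hgt₂ hε₁le⟩
end

section
/- Let v : ℝ → ℝ² be continuous with second coordinate v²(t) > 0 for all t, v²(t) → 0 as t → -∞, and sin(v¹(t) + 1/v²(t)) ≠ 0 for all t (i.e., v avoids the zero set of V). Then for every x₀ ∈ ℝ, the point (x₀, 0) is a subsequential limit of v(t) mod 2π as t → -∞; i.e., there exist t_i → -∞ with v²(t_i) → 0 and v¹(t_i) ≡ x₀ (mod 2π) in the limit. -/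
open Real Set Filter Topology

/-- a path in the upper half-plane approaching {y = 0} as t → -∞
and avoiding the zero set {sin(x + 1/y) = 0} winds around the cylinder: every
point (x₀, 0) is a subsequential limit mod 2π. -/
theorem stmt_16 (v : ℝ → ℝ × ℝ) (hc : Continuous v)
    (hpos : ∀ t, 0 < (v t).2)
    (hlim : Tendsto (fun t => (v t).2) atBot (nhds 0))
    (havoid : ∀ t, Real.sin ((v t).1 + 1 / (v t).2) ≠ 0) :
    ∀ x₀ : ℝ, ∃ t : ℕ → ℝ, Tendsto t atTop atBot ∧
      Tendsto (fun i => (v (t i)).2) atTop (nhds 0) ∧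
      ∃ k : ℕ → ℤ,
        Tendsto (fun i => (v (t i)).1 - 2 * Real.pi * k i) atTop (nhds x₀) := by
  intro x₀
  set f : ℝ → ℝ := fun t => (v t).1 + 1 / (v t).2 with hf
  have hfc : Continuous f := hc.fst.add (continuous_const.div hc.snd fun t => (hpos t).ne')
  have hnot : ∀ t, ∀ m : ℤ, f t ≠ m * π := by
    intro t m h
    exact havoid t (by rw [show (v t).1 + 1 / (v t).2 = f t from rfl, h]
                       exact Real.sin_int_mul_pi m)
  -- upper bound C = (⌊f 0 / π⌋ + 1) * π
  set C : ℝ := ((⌊f 0 / π⌋ : ℝ) + 1) * π with hC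
  have hf0 : f 0 < C := by
    have h1 : f 0 / π < (⌊f 0 / π⌋ : ℝ) + 1 := Int.lt_floor_add_one _
    rw [hC]
    calc f 0 = (f 0 / π) * π := by field_simp
    _ < ((⌊f 0 / π⌋ : ℝ) + 1) * π := by
        exact mul_lt_mul_of_pos_right h1 Real.pi_pos
  have hbound : ∀ t, f t < C := by
    intro t
    by_contra hcon
    push_neg at hcon
    have hmem : C ∈ uIcc (f 0) (f t) := Set.mem_uIcc.mpr (Or.inl ⟨hf0.le, hcon⟩)
    obtain ⟨s, _, hs⟩ := intermediate_value_uIcc hfc.continuousOn hmem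
    have : f s = ((⌊f 0 / π⌋ + 1 : ℤ) : ℝ) * π := by rw [hs, hC]; push_cast; ring
    exact hnot s _ this
  -- v¹ → -∞ as t → -∞
  have hinv : Tendsto (fun t => 1 / (v t).2) atBot atTop := by
    have h1 : Tendsto (fun t => (v t).2) atBot (𝓝[>] (0:ℝ)) :=
      tendsto_nhdsWithin_of_tendsto_nhds_of_eventually_within _ hlim
        (Eventually.of_forall fun t => hpos t)
    simpa [one_div, Function.comp_def] using tendsto_inv_nhdsGT_zero.comp h1
  have hv1 : Tendsto (fun t => (v t).1) atBot atBot := by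
    have h2 : Tendsto (fun t => C + -(1 / (v t).2)) atBot atBot :=
      tendsto_atBot_add_const_left _ C (tendsto_neg_atTop_atBot.comp hinv)
    refine tendsto_atBot_mono (fun t => ?_) h2
    have := hbound t
    have h3 : (v t).1 = f t - 1 / (v t).2 := by simp only [hf]; ring
    rw [h3]
    have h4 : f t - 1 / (v t).2 < C - 1 / (v t).2 := by exact sub_lt_sub_right this _
    linarith [h4]
  -- key existence
  have key : ∀ i : ℕ, ∃ (t : ℝ) (k : ℤ), t ≤ -(i : ℝ) ∧ (v t).1 = x₀ + 2 * π * k := by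
    intro i
    set b := (v (-(i : ℝ))).1 with hb
    obtain ⟨k, hk⟩ : ∃ k : ℤ, x₀ + 2 * π * k ≤ b := by
      refine ⟨⌊(b - x₀) / (2 * π)⌋, ?_⟩
      have h2π : (0:ℝ) < 2 * π := by positivity
      have h4 := mul_le_mul_of_nonneg_left (Int.floor_le ((b - x₀) / (2 * π))) h2π.le
      rw [mul_div_cancel₀ _ h2π.ne'] at h4
      linarith
    obtain ⟨s₀, hs₀⟩ :=eventually_atBot.mp (hv1.eventually_le_atBot (x₀ + 2 * π * k))
    set s := min s₀ (-(i : ℝ)) with hsdef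
    have hs : (v s).1 ≤ x₀ + 2 * π * k := hs₀ s (min_le_left _ _)
    have hmem : x₀ + 2 * π * k ∈ Icc ((v s).1) b := ⟨hs, hk⟩
    obtain ⟨t, htmem, hvt⟩ :=
      intermediate_value_Icc (min_le_right s₀ (-(i : ℝ))) hc.fst.continuousOn hmem
    exact ⟨t, k, htmem.2, hvt⟩
  choose t k ht hvt using key
  have htend : Tendsto t atTop atBot :=
    tendsto_atBot_mono ht (tendsto_neg_atTop_atBot.comp tendsto_natCast_atTop_atTop)
  refine ⟨t, htend, hlim.comp htend, k, ?_⟩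
  have : (fun i => (v (t i)).1 - 2 * Real.pi * k i) = fun _ => x₀ := by
    funext i; rw [hvt i]; ring
  rw [this]
  exact tendsto_const_nhds
end
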